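/- arXiv:1804.02718 — 3 statements merged into one kernel-verified Lean document; each statement's English description precedes it below -/
import Mathlib

section
/- Let f, g: [a,b]×[c,d] → ℝ be continuous, nonnegative, and similarly ordered, meaning that ( f(x₁,y₁) − f(x₂,y₂) )( g(x₁,y₁) − g(x₂,y₂) ) ≥ 0 for all points (x₁,y₁), (x₂,y₂) ∈ [a,b]×[c,d]. Then ( ∫_c^d ∫_a^b f(x,y) dx dy )( ∫_c^d ∫_a^b g(x,y) dx dy ) ≤ (b−a)(d−c) ∫_c^d ∫_a^b f(x,y) g(x,y) dx dy. -/
open MeasureTheory Set intervalIntegral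

/-!
Integrating the nonnegative function `(F p - F q) * (G p - G q)` in both variables gives
`2 * (μ(X) * ∫ F G - ∫ F * ∫ G) ≥ 0`. Fubini identifies the iterated interval integrals
with integrals over the rectangle with respect to the restricted Lebesgue measure.
-/

section Chebyshev

variable {α : Type*} [MeasurableSpace α] {μ : Measure α} [IsFiniteMeasure μ] {F G : α → ℝ}

theorem integral_linear_combination_mul (hF : Integrable F μ) (hG : Integrable G μ)
    (hFG : Integrable (fun x => F x * G x) μ) (r s t u : ℝ) :
    ∫ x, (r * (F x * G x) - s * F x - t * G x + u) ∂μ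
      = r * ∫ x, F x * G x ∂μ - s * ∫ x, F x ∂μ - t * ∫ x, G x ∂μ + u * μ.real univ := by
  rw [MeasureTheory.integral_add (by fun_prop) (by fun_prop),
    MeasureTheory.integral_sub (by fun_prop) (by fun_prop),
    MeasureTheory.integral_sub (by fun_prop) (by fun_prop),
    MeasureTheory.integral_const_mul, MeasureTheory.integral_const_mul,
    MeasureTheory.integral_const_mul, MeasureTheory.integral_const, smul_eq_mul, mul_comm u]

theorem integral_integral_mul_sub_mul_sub (hF : Integrable F μ) (hG : Integrable G μ)
    (hFG : Integrable (fun x => F x * G x) μ) :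
    ∫ p, ∫ q, (F p - F q) * (G p - G q) ∂μ ∂μ
      = 2 * (μ.real univ * ∫ x, F x * G x ∂μ - (∫ x, F x ∂μ) * ∫ x, G x ∂μ) := by
  have inner (p : α) : ∫ q, (F p - F q) * (G p - G q) ∂μ
      = ∫ q, (1 * (F q * G q) - G p * F q - F p * G q + F p * G p) ∂μ := by
    congr 1; ext q; ring
  simp_rw [inner, integral_linear_combination_mul hF hG hFG]
  have outer (p : α) : 1 * ∫ x, F x * G x ∂μ - G p * ∫ x, F x ∂μ - F p * ∫ x, G x ∂μ
      + F p * G p * μ.real univ = μ.real univ * (F p * G p) - (∫ x, G x ∂μ) * F p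
        - (∫ x, F x ∂μ) * G p + ∫ x, F x * G x ∂μ := by ring
  simp_rw [outer, integral_linear_combination_mul hF hG hFG]
  ring

theorem integral_mul_integral_le_measureReal_univ_mul_integral_mul (hF : Integrable F μ)
    (hG : Integrable G μ) (hFG : Integrable (fun x => F x * G x) μ)
    (hord : ∀ᵐ p ∂μ, ∀ᵐ q ∂μ, 0 ≤ (F p - F q) * (G p - G q)) :
    (∫ x, F x ∂μ) * (∫ x, G x ∂μ) ≤ μ.real univ * ∫ x, F x * G x ∂μ := by
  have h : 0 ≤ ∫ p, ∫ q, (F p - F q) * (G p - G q) ∂μ ∂μ :=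
    integral_nonneg_of_ae (hord.mono fun _ hp => integral_nonneg_of_ae hp)
  rw [integral_integral_mul_sub_mul_sub hF hG hFG] at h
  linarith

end Chebyshev

theorem intervalIntegral_intervalIntegral_eq_setIntegral_Icc_prod_Icc {a b c d : ℝ}
    (hab : a ≤ b) (hcd : c ≤ d) {h : ℝ × ℝ → ℝ} (hh : IntegrableOn h (Icc a b ×ˢ Icc c d)) :
    ∫ y in c..d, ∫ x in a..b, h (x, y) = ∫ p in Icc a b ×ˢ Icc c d, h p := by
  rw [Measure.volume_eq_prod] at hh ⊢
  simp_rw [integral_of_le hcd, integral_of_le hab, ← integral_Icc_eq_integral_Ioc]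
  rw [← setIntegral_prod_swap]
  exact (setIntegral_prod _ hh.swap).symm

theorem chebyshev_integral_inequality_two_vars_general
    (a b c d : ℝ) (hab : a < b) (hcd : c < d)
    (f g : ℝ × ℝ → ℝ)
    (hf : ContinuousOn f (Icc a b ×ˢ Icc c d))
    (hg : ContinuousOn g (Icc a b ×ˢ Icc c d))
    (hord : ∀ p ∈ Icc a b ×ˢ Icc c d, ∀ q ∈ Icc a b ×ˢ Icc c d,
      0 ≤ (f p - f q) * (g p - g q)) :
    (∫ y in c..d, ∫ x in a..b, f (x, y)) * (∫ y in c..d, ∫ x in a..b, g (x, y))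
      ≤ (b - a) * (d - c) * ∫ y in c..d, ∫ x in a..b, f (x, y) * g (x, y) := by
  set R := Icc a b ×ˢ Icc c d
  have hR : IsCompact R := isCompact_Icc.prod isCompact_Icc
  have : IsFiniteMeasure (volume.restrict R) := isFiniteMeasure_restrict.mpr hR.measure_ne_top
  have hvol : (volume.restrict R).real univ = (b - a) * (d - c) := by
    rw [measureReal_restrict_apply_univ, Measure.volume_eq_prod, measureReal_prod_prod,
      Real.volume_real_Icc_of_le hab.le, Real.volume_real_Icc_of_le hcd.le]
  have hfi : IntegrableOn f R := hf.integrableOn_compact hR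
  have hgi : IntegrableOn g R := hg.integrableOn_compact hR
  have hfgi : IntegrableOn (fun p => f p * g p) R := (hf.mul hg).integrableOn_compact hR
  have hord_ae : ∀ᵐ p ∂volume.restrict R, ∀ᵐ q ∂volume.restrict R,
      0 ≤ (f p - f q) * (g p - g q) := by
    have hmem := ae_restrict_mem (μ := volume) hR.isClosed.measurableSet
    filter_upwards [hmem] with p hp
    filter_upwards [hmem] with q hq using hord p hp q hq
  rw [intervalIntegral_intervalIntegral_eq_setIntegral_Icc_prod_Icc hab.le hcd.le hfi,
    intervalIntegral_intervalIntegral_eq_setIntegral_Icc_prod_Icc hab.le hcd.le hgi,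
    intervalIntegral_intervalIntegral_eq_setIntegral_Icc_prod_Icc hab.le hcd.le hfgi, ← hvol]
  exact integral_mul_integral_le_measureReal_univ_mul_integral_mul hfi hgi hfgi hord_ae

/-- **Chebyshev integral inequality** for continuous, nonnegative, similarly ordered
functions of two variables on a rectangle `[a,b] × [c,d]`. -/
theorem chebyshev_integral_inequality_two_vars
    (a b c d : ℝ) (hab : a < b) (hcd : c < d)
    (f g : ℝ × ℝ → ℝ)
    (hf : ContinuousOn f (Icc a b ×ˢ Icc c d))
    (hg : ContinuousOn g (Icc a b ×ˢ Icc c d))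
    (hf0 : ∀ p ∈ Icc a b ×ˢ Icc c d, 0 ≤ f p)
    (hg0 : ∀ p ∈ Icc a b ×ˢ Icc c d, 0 ≤ g p)
    (hord : ∀ p ∈ Icc a b ×ˢ Icc c d, ∀ q ∈ Icc a b ×ˢ Icc c d,
      0 ≤ (f p - f q) * (g p - g q)) :
    (∫ y in c..d, ∫ x in a..b, f (x, y)) * (∫ y in c..d, ∫ x in a..b, g (x, y))
      ≤ (b - a) * (d - c) * ∫ y in c..d, ∫ x in a..b, f (x, y) * g (x, y) :=
  chebyshev_integral_inequality_two_vars_general a b c d hab hcd f g hf hg hord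
end

section
/- Let 0 < s ≤ 1, α ∈ (0,2), and u ∈ C^{1,s}(ℝ²). Then there exists a constant C > 0 such that for every γ ∈ (α,2], every x ∈ ℝ², all integers m,n ≥ 0 with m+n ≤ 1, and every ξ = (ξ,η) ∈ [0,∞)²∖{(0,0)}, |∂_{m,n}ψ_γ(x,(ξ,η))| ≤ C |ξ|^{s+1−γ−(m+n)}, where ∂_{m,n} denotes the partial derivative ∂_ξ^m ∂_η^n (interpreted as a one-sided derivative at points on the coordinate axes) and |ξ| = √(ξ²+η²). -/
open MeasureTheory Set

/-- The Hölder space `C^{k,s}`: `u` has continuous partial derivatives up to order `k`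
and the `k`-th derivatives are uniformly Hölder continuous with exponent `s`. -/
def CkHolder (k : ℕ) (s : ℝ) {E : Type*} [NormedAddCommGroup E] [NormedSpace ℝ E]
    (u : E → ℝ) : Prop :=
  ContDiff ℝ k u ∧ ∃ C : ℝ, 0 < C ∧ ∀ x y : E,
    ‖iteratedFDeriv ℝ k u x - iteratedFDeriv ℝ k u y‖ ≤ C * ‖x - y‖ ^ s

/-- The central difference quotient `ψ_γ(x, ξ)`. -/
noncomputable def psi2 (u : ℝ × ℝ → ℝ) (γ : ℝ) (x ξ : ℝ × ℝ) : ℝ :=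
  Real.sqrt (ξ.1 ^ 2 + ξ.2 ^ 2) ^ (-γ) *
    (u (x.1 + ξ.1, x.2 + ξ.2) + u (x.1 + ξ.1, x.2 - ξ.2) +
     u (x.1 - ξ.1, x.2 + ξ.2) + u (x.1 - ξ.1, x.2 - ξ.2) - 4 * u x)

/-- The partial derivative `∂_{m,n} g = ∂_ξ^m ∂_η^n g` of a function of two real variables. -/
noncomputable def pd (m n : ℕ) (g : ℝ × ℝ → ℝ) (p : ℝ × ℝ) : ℝ :=
  deriv^[m] (fun ξ => deriv^[n] (fun η => g (ξ, η)) p.2) p.1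

/-!
Write `ψ_γ(x, ξ) = |ξ|^{-γ} S(ξ)` with `S` the four-point difference. `S` is the sum of the
symmetric second differences `u(x + v) + u(x - v) - 2u(x)` along `v = (ξ, η)` and `v = (ξ, -η)`;
in each the linear Taylor terms cancel, so the mean value inequality with the `s`-Hölder modulus
of `Du` gives `|S| ≲ |ξ|^{1+s}`. The derivative of `S` in `ξ` is a sum of differences
`Du(x + v) - Du(x - v)`, hence `O(|ξ|^s)`. The product rule with `|∇ |ξ|^{-γ}| ≲ γ |ξ|^{-γ-1}`
and `0 < γ ≤ 2` gives both bounds with a constant independent of `γ`.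
-/

section HolderDerivative

variable {E : Type*} [NormedAddCommGroup E] [NormedSpace ℝ E] {u : E → ℝ} {s K : ℝ}

theorem iteratedFDeriv_one_eq (u : E → ℝ) (x : E) :
    iteratedFDeriv ℝ 1 u x = (continuousMultilinearCurryFin1 ℝ E ℝ).symm (fderiv ℝ u x) := by
  ext m
  simp [iteratedFDeriv_one_apply]

theorem CkHolder.differentiable_and_holder_fderiv (hu : CkHolder 1 s u) :
    Differentiable ℝ u ∧ ∃ K, 0 < K ∧ ∀ x y, ‖fderiv ℝ u x - fderiv ℝ u y‖ ≤ K * ‖x - y‖ ^ s := by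
  obtain ⟨hC1, K, hK, hD⟩ := hu
  refine ⟨hC1.differentiable one_ne_zero, K, hK, fun x y => ?_⟩
  simpa [iteratedFDeriv_one_eq, ← map_sub] using hD x y

theorem abs_sub_sub_fderiv_le (hu : Differentiable ℝ u) (hs : 0 ≤ s) (hK : 0 ≤ K)
    (hDu : ∀ x y, ‖fderiv ℝ u x - fderiv ℝ u y‖ ≤ K * ‖x - y‖ ^ s) (a v : E) :
    |u (a + v) - u a - fderiv ℝ u a v| ≤ K * ‖v‖ ^ s * ‖v‖ := by
  have hbound : ∀ z ∈ Metric.closedBall a ‖v‖, ‖fderiv ℝ u z - fderiv ℝ u a‖ ≤ K * ‖v‖ ^ s :=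
    fun z hz => (hDu z a).trans (by gcongr; exact mem_closedBall_iff_norm.mp hz)
  simpa using (convex_closedBall a ‖v‖).norm_image_sub_le_of_norm_fderiv_le'
    (fun z _ => hu z) hbound (Metric.mem_closedBall_self (norm_nonneg v))
    (show a + v ∈ Metric.closedBall a ‖v‖ by simp)

end HolderDerivative

section SecondDifference

variable {E : Type*} [NormedAddCommGroup E] [NormedSpace ℝ E] {u : E → ℝ} {s K : ℝ}

def secondDiff (u : E → ℝ) (a v : E) : ℝ := u (a + v) + u (a - v) - 2 * u a

theorem abs_secondDiff_le (hu : Differentiable ℝ u) (hs : 0 ≤ s) (hK : 0 ≤ K)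
    (hDu : ∀ x y, ‖fderiv ℝ u x - fderiv ℝ u y‖ ≤ K * ‖x - y‖ ^ s) (a v : E) :
    |secondDiff u a v| ≤ 2 * (K * ‖v‖ ^ s * ‖v‖) := by
  have hadd := abs_sub_sub_fderiv_le hu hs hK hDu a v
  have hsub := abs_sub_sub_fderiv_le hu hs hK hDu a (-v)
  rw [norm_neg, ← sub_eq_add_neg] at hsub
  calc |secondDiff u a v|
      = |(u (a + v) - u a - fderiv ℝ u a v) + (u (a - v) - u a - fderiv ℝ u a (-v))| := by
        rw [map_neg, secondDiff]; ring_nf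
    _ ≤ _ := (abs_add_le _ _).trans (add_le_add hadd hsub)
    _ = _ := by ring

theorem hasFDerivAt_secondDiff (hu : Differentiable ℝ u) (a v : E) :
    HasFDerivAt (secondDiff u a) (fderiv ℝ u (a + v) - fderiv ℝ u (a - v)) v := by
  have hadd := (hu (a + v)).hasFDerivAt.comp v ((hasFDerivAt_id v).const_add a)
  have hsub := (hu (a - v)).hasFDerivAt.comp v ((hasFDerivAt_id v).const_sub a)
  refine ((hadd.add hsub).sub_const (2 * u a)).congr_fderiv ?_
  ext w
  simp [sub_eq_add_neg]

end SecondDifference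

section SquareDifference

variable {u : ℝ × ℝ → ℝ} {s K : ℝ}

def reflectSnd : ℝ × ℝ →L[ℝ] ℝ × ℝ :=
  (ContinuousLinearMap.id ℝ ℝ).prodMap (-ContinuousLinearMap.id ℝ ℝ)

theorem reflectSnd_apply (ξ : ℝ × ℝ) : reflectSnd ξ = (ξ.1, -ξ.2) := rfl

theorem norm_reflectSnd_apply (ξ : ℝ × ℝ) : ‖reflectSnd ξ‖ = ‖ξ‖ := by
  simp only [reflectSnd_apply, Prod.norm_def, norm_neg]

theorem norm_reflectSnd_le : ‖reflectSnd‖ ≤ 1 :=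
  ContinuousLinearMap.opNorm_le_bound _ zero_le_one fun ξ => by rw [norm_reflectSnd_apply, one_mul]

def squareDiff (u : ℝ × ℝ → ℝ) (x ξ : ℝ × ℝ) : ℝ :=
  u (x.1 + ξ.1, x.2 + ξ.2) + u (x.1 + ξ.1, x.2 - ξ.2) +
    u (x.1 - ξ.1, x.2 + ξ.2) + u (x.1 - ξ.1, x.2 - ξ.2) - 4 * u x

theorem squareDiff_eq_secondDiff_add (u : ℝ × ℝ → ℝ) (x : ℝ × ℝ) :
    squareDiff u x = fun ξ => secondDiff u x ξ + secondDiff u x (reflectSnd ξ) := by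
  ext ξ
  obtain ⟨a, b⟩ := x
  obtain ⟨p, q⟩ := ξ
  simp only [squareDiff, secondDiff, reflectSnd_apply, Prod.mk_add_mk, Prod.mk_sub_mk,
    ← sub_eq_add_neg, sub_neg_eq_add]
  ring

theorem abs_squareDiff_le (hu : Differentiable ℝ u) (hs : 0 ≤ s) (hK : 0 ≤ K)
    (hDu : ∀ x y, ‖fderiv ℝ u x - fderiv ℝ u y‖ ≤ K * ‖x - y‖ ^ s) (x ξ : ℝ × ℝ) :
    |squareDiff u x ξ| ≤ 4 * (K * ‖ξ‖ ^ s * ‖ξ‖) := by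
  have hreflect := abs_secondDiff_le hu hs hK hDu x (reflectSnd ξ)
  rw [norm_reflectSnd_apply] at hreflect
  rw [squareDiff_eq_secondDiff_add]
  linarith [abs_add_le (secondDiff u x ξ) (secondDiff u x (reflectSnd ξ)),
    abs_secondDiff_le hu hs hK hDu x ξ]

theorem exists_hasFDerivAt_squareDiff_norm_le (hu : Differentiable ℝ u)
    (hDu : ∀ x y, ‖fderiv ℝ u x - fderiv ℝ u y‖ ≤ K * ‖x - y‖ ^ s) (x ξ : ℝ × ℝ) :
    ∃ L : ℝ × ℝ →L[ℝ] ℝ, HasFDerivAt (squareDiff u x) L ξ ∧ ‖L‖ ≤ 2 * (K * (2 * ‖ξ‖) ^ s) := by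
  have hD : ∀ v, ‖fderiv ℝ u (x + v) - fderiv ℝ u (x - v)‖ ≤ K * (2 * ‖v‖) ^ s := fun v => by
    simpa [← two_smul ℝ v, norm_smul] using hDu (x + v) (x - v)
  rw [squareDiff_eq_secondDiff_add]
  refine ⟨_, (hasFDerivAt_secondDiff hu x ξ).add
    ((hasFDerivAt_secondDiff hu x (reflectSnd ξ)).comp ξ reflectSnd.hasFDerivAt), ?_⟩
  calc _ ≤ _ := norm_add_le _ _
    _ ≤ K * (2 * ‖ξ‖) ^ s + K * (2 * ‖ξ‖) ^ s * 1 := by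
      gcongr
      · exact hD ξ
      · have hDr := hD (reflectSnd ξ)
        rw [norm_reflectSnd_apply] at hDr
        exact (ContinuousLinearMap.opNorm_comp_le _ _).trans <|
          mul_le_mul hDr norm_reflectSnd_le (norm_nonneg _) ((norm_nonneg _).trans (hD ξ))
    _ = _ := by ring

end SquareDifference

section EuclideanNorm

/-- The `|ξ|` of `ψ_γ`; the norm of `ℝ × ℝ` itself is the sup norm. -/
noncomputable def euclNorm (ξ : ℝ × ℝ) : ℝ := √(ξ.1 ^ 2 + ξ.2 ^ 2)

theorem norm_le_euclNorm (ξ : ℝ × ℝ) : ‖ξ‖ ≤ euclNorm ξ :=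
  max_le (Real.abs_le_sqrt (by nlinarith [sq_nonneg ξ.2]))
    (Real.abs_le_sqrt (by nlinarith [sq_nonneg ξ.1]))

theorem euclNorm_pos {ξ : ℝ × ℝ} (hξ : ξ ≠ 0) : 0 < euclNorm ξ :=
  (norm_pos_iff.mpr hξ).trans_le (norm_le_euclNorm ξ)

theorem euclNorm_rpow (ξ : ℝ × ℝ) (e : ℝ) : euclNorm ξ ^ e = (ξ.1 ^ 2 + ξ.2 ^ 2) ^ (e / 2) := by
  rw [euclNorm, Real.sqrt_eq_rpow, ← Real.rpow_mul (by positivity)]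
  ring_nf

theorem exists_hasFDerivAt_sq_add_sq_norm_le (ξ : ℝ × ℝ) :
    ∃ L : ℝ × ℝ →L[ℝ] ℝ, HasFDerivAt (fun ζ : ℝ × ℝ => ζ.1 ^ 2 + ζ.2 ^ 2) L ξ ∧
      ‖L‖ ≤ 4 * euclNorm ξ := by
  refine ⟨_, (hasFDerivAt_fst.pow 2).add (hasFDerivAt_snd.pow 2), (norm_add_le _ _).trans ?_⟩
  simp only [norm_smul, nsmul_eq_mul, Nat.cast_ofNat, Nat.add_one_sub_one, pow_one, norm_mul,
    Real.norm_two]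
  have hρ : 0 ≤ euclNorm ξ := Real.sqrt_nonneg _
  have h₁ : ‖ξ.1‖ ≤ euclNorm ξ := (norm_fst_le ξ).trans (norm_le_euclNorm ξ)
  have h₂ : ‖ξ.2‖ ≤ euclNorm ξ := (norm_snd_le ξ).trans (norm_le_euclNorm ξ)
  have hfst := ContinuousLinearMap.norm_fst_le ℝ ℝ ℝ
  have hsnd := ContinuousLinearMap.norm_snd_le ℝ ℝ ℝ
  calc _ ≤ 2 * euclNorm ξ * 1 + 2 * euclNorm ξ * 1 := by gcongr
    _ = _ := by ring

theorem exists_hasFDerivAt_euclNorm_rpow_norm_le (γ : ℝ) {ξ : ℝ × ℝ} (hξ : ξ ≠ 0) :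
    ∃ L : ℝ × ℝ →L[ℝ] ℝ, HasFDerivAt (fun ζ => euclNorm ζ ^ (-γ)) L ξ ∧
      ‖L‖ ≤ 2 * |γ| * euclNorm ξ ^ (-γ - 1) := by
  have hρ := euclNorm_pos hξ
  obtain ⟨Q, hQ, hQnorm⟩ := exists_hasFDerivAt_sq_add_sq_norm_le ξ
  have hpow : (ξ.1 ^ 2 + ξ.2 ^ 2) ^ (-γ / 2 - 1) = euclNorm ξ ^ (-γ - 2) := by
    rw [euclNorm_rpow]; ring_nf
  rw [show (fun ζ => euclNorm ζ ^ (-γ)) = fun ζ : ℝ × ℝ => (ζ.1 ^ 2 + ζ.2 ^ 2) ^ (-γ / 2) from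
    funext fun ζ => euclNorm_rpow ζ (-γ)]
  refine ⟨_, hQ.rpow_const (Or.inl (Real.sqrt_pos.mp hρ).ne'), ?_⟩
  calc _ = |γ| / 2 * euclNorm ξ ^ (-γ - 2) * ‖Q‖ := by
        rw [norm_smul, hpow, norm_mul, Real.norm_eq_abs, Real.norm_eq_abs, abs_div, abs_neg,
          abs_two, abs_of_pos (Real.rpow_pos_of_pos hρ _)]
    _ ≤ |γ| / 2 * euclNorm ξ ^ (-γ - 2) * (4 * euclNorm ξ) := by gcongr
    _ = 2 * |γ| * euclNorm ξ ^ (-γ - 1) := by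
      rw [show -γ - 1 = (-γ - 2) + 1 by ring, Real.rpow_add_one hρ.ne']
      ring

end EuclideanNorm

section DifferenceQuotient

variable {u : ℝ × ℝ → ℝ} {s K : ℝ}

theorem psi2_eq (u : ℝ × ℝ → ℝ) (γ : ℝ) (x : ℝ × ℝ) :
    psi2 u γ x = fun ξ => euclNorm ξ ^ (-γ) * squareDiff u x ξ := rfl

theorem abs_psi2_le (hu : Differentiable ℝ u) (hs : 0 ≤ s) (hK : 0 ≤ K)
    (hDu : ∀ x y, ‖fderiv ℝ u x - fderiv ℝ u y‖ ≤ K * ‖x - y‖ ^ s) (γ : ℝ) (x : ℝ × ℝ)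
    {ξ : ℝ × ℝ} (hξ : ξ ≠ 0) :
    |psi2 u γ x ξ| ≤ 4 * K * euclNorm ξ ^ (s + 1 - γ) := by
  have hρ := euclNorm_pos hξ
  have hξρ := norm_le_euclNorm ξ
  rw [psi2_eq, abs_mul, abs_of_pos (Real.rpow_pos_of_pos hρ _)]
  calc _ ≤ euclNorm ξ ^ (-γ) * (4 * (K * euclNorm ξ ^ s * euclNorm ξ)) := by
        gcongr
        exact (abs_squareDiff_le hu hs hK hDu x ξ).trans (by gcongr)
    _ = _ := by
      rw [show s + 1 - γ = (-γ + s) + 1 by ring, Real.rpow_add_one hρ.ne', Real.rpow_add hρ]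
      ring

theorem exists_hasFDerivAt_psi2_norm_le (hu : Differentiable ℝ u) (hs : 0 ≤ s) (hK : 0 ≤ K)
    (hDu : ∀ x y, ‖fderiv ℝ u x - fderiv ℝ u y‖ ≤ K * ‖x - y‖ ^ s) (γ : ℝ) (x : ℝ × ℝ)
    {ξ : ℝ × ℝ} (hξ : ξ ≠ 0) :
    ∃ L : ℝ × ℝ →L[ℝ] ℝ, HasFDerivAt (psi2 u γ x) L ξ ∧
      ‖L‖ ≤ (8 * |γ| + 2 * 2 ^ s) * K * euclNorm ξ ^ (s - γ) := by
  have hρ := euclNorm_pos hξ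
  have hξρ := norm_le_euclNorm ξ
  obtain ⟨Lρ, hρd, hLρ⟩ := exists_hasFDerivAt_euclNorm_rpow_norm_le γ hξ
  obtain ⟨LS, hSd, hLS⟩ := exists_hasFDerivAt_squareDiff_norm_le hu hDu x ξ
  refine ⟨_, hρd.mul hSd, ?_⟩
  calc _ ≤ euclNorm ξ ^ (-γ) * ‖LS‖ + |squareDiff u x ξ| * ‖Lρ‖ := by
        refine (norm_add_le _ _).trans_eq ?_
        rw [norm_smul, norm_smul, Real.norm_eq_abs, Real.norm_eq_abs,
          abs_of_pos (Real.rpow_pos_of_pos hρ _)]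
        rfl
    _ ≤ euclNorm ξ ^ (-γ) * (2 * (K * (2 * euclNorm ξ) ^ s))
        + 4 * (K * euclNorm ξ ^ s * euclNorm ξ) * (2 * |γ| * euclNorm ξ ^ (-γ - 1)) := by
      gcongr
      · exact hLS.trans (by gcongr)
      · exact (abs_squareDiff_le hu hs hK hDu x ξ).trans (by gcongr)
    _ = _ := by
      have hsplit : euclNorm ξ ^ (s - γ) = euclNorm ξ ^ s * euclNorm ξ ^ (-γ) := by
        rw [← Real.rpow_add hρ, sub_eq_add_neg]
      have hshift : euclNorm ξ ^ (-γ) = euclNorm ξ ^ (-γ - 1) * euclNorm ξ := by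
        rw [← Real.rpow_add_one hρ.ne', sub_add_cancel]
      rw [Real.mul_rpow zero_le_two hρ.le, hsplit, hshift]
      ring

end DifferenceQuotient

theorem abs_pd_le_of_hasFDerivAt {g : ℝ × ℝ → ℝ} {L : ℝ × ℝ →L[ℝ] ℝ} {ξ : ℝ × ℝ} {m n : ℕ}
    (hmn : m + n = 1) (hg : HasFDerivAt g L ξ) : |pd m n g ξ| ≤ ‖L‖ := by
  obtain ⟨rfl, rfl⟩ | ⟨rfl, rfl⟩ : (m = 1 ∧ n = 0) ∨ (m = 0 ∧ n = 1) := by omega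
  · have hdir : HasDerivAt (fun t => g (t, ξ.2)) (L (1, 0)) ξ.1 :=
      hg.comp_hasDerivAt ξ.1 ((hasDerivAt_id _).prodMk (hasDerivAt_const _ _))
    simpa [pd, hdir.deriv] using L.le_opNorm (1, 0)
  · have hdir : HasDerivAt (fun t => g (ξ.1, t)) (L (0, 1)) ξ.2 :=
      hg.comp_hasDerivAt ξ.2 ((hasDerivAt_const _ _).prodMk (hasDerivAt_id _))
    simpa [pd, hdir.deriv] using L.le_opNorm (0, 1)

theorem psi_first_derivative_bound_general
    (s α : ℝ) (hs0 : 0 < s) (hα0 : 0 < α)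
    (u : ℝ × ℝ → ℝ) (hu : CkHolder 1 s u) :
    ∃ C : ℝ, 0 < C ∧ ∀ γ : ℝ, α < γ → γ ≤ 2 → ∀ x : ℝ × ℝ, ∀ m n : ℕ, m + n ≤ 1 →
      ∀ ξ ∈ (Ici (0 : ℝ) ×ˢ Ici (0 : ℝ)) \ {((0 : ℝ), (0 : ℝ))},
        |pd m n (fun ζ => psi2 u γ x ζ) ξ|
          ≤ C * Real.sqrt (ξ.1 ^ 2 + ξ.2 ^ 2) ^ (s + 1 - γ - ((m : ℝ) + (n : ℝ))) := by
  obtain ⟨hu, K, hK, hDu⟩ := hu.differentiable_and_holder_fderiv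
  refine ⟨(16 + 2 * 2 ^ s) * K, by positivity, ?_⟩
  rintro γ hαγ hγ2 x m n hmn ξ ⟨-, hξ⟩
  have hξ0 : ξ ≠ 0 := hξ
  have hγ : |γ| ≤ 2 := abs_le.mpr ⟨by linarith, hγ2⟩
  have hρ := euclNorm_pos hξ0
  obtain ⟨rfl, rfl⟩ | hmn1 : (m = 0 ∧ n = 0) ∨ m + n = 1 := by omega
  · calc _ ≤ 4 * K * euclNorm ξ ^ (s + 1 - γ) := abs_psi2_le hu hs0.le hK.le hDu γ x hξ0
      _ ≤ _ := by
        simp only [CharP.cast_eq_zero, add_zero, sub_zero]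
        refine mul_le_mul_of_nonneg_right ?_ (Real.rpow_nonneg hρ.le _)
        nlinarith [Real.rpow_nonneg zero_le_two s]
  · obtain ⟨L, hL, hLn⟩ := exists_hasFDerivAt_psi2_norm_le hu hs0.le hK.le hDu γ x hξ0
    have hexp : s + 1 - γ - ((m : ℝ) + n) = s - γ := by
      rw [← Nat.cast_add, hmn1, Nat.cast_one]; ring
    rw [hexp]
    calc _ ≤ ‖L‖ := abs_pd_le_of_hasFDerivAt hmn1 hL
      _ ≤ _ := hLn
      _ ≤ _ := by
        refine mul_le_mul_of_nonneg_right ?_ (Real.rpow_nonneg hρ.le _)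
        gcongr
        linarith

/-- If `u ∈ C^{1,s}(ℝ²)` with `0 < s ≤ 1`, then for every `γ ∈ (α, 2]` and all `m + n ≤ 1`,
`|∂_{m,n} ψ_γ(x, ξ)| ≤ C |ξ|^{s+1-γ-(m+n)}` for `ξ ∈ [0,∞)² ∖ {(0,0)}`. -/
theorem psi_first_derivative_bound
    (s α : ℝ) (hs0 : 0 < s) (hs1 : s ≤ 1) (hα0 : 0 < α) (hα2 : α < 2)
    (u : ℝ × ℝ → ℝ) (hu : CkHolder 1 s u) :
    ∃ C : ℝ, 0 < C ∧ ∀ γ : ℝ, α < γ → γ ≤ 2 → ∀ x : ℝ × ℝ, ∀ m n : ℕ, m + n ≤ 1 →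
      ∀ ξ ∈ (Ici (0 : ℝ) ×ˢ Ici (0 : ℝ)) \ {((0 : ℝ), (0 : ℝ))},
        |pd m n (fun ζ => psi2 u γ x ζ) ξ|
          ≤ C * Real.sqrt (ξ.1 ^ 2 + ξ.2 ^ 2) ^ (s + 1 - γ - ((m : ℝ) + (n : ℝ))) :=
  psi_first_derivative_bound_general s α hs0 hα0 u hu
end

section
/- Let L > 0 and p > 0 with p ≠ 2. Then there exists a constant C > 0, depending only on p and L, such that for every integer N ≥ 1 and h = L/N, ∫_{([0,L]×[0,L]) ∖ ([0,h]×[0,h])} (ξ²+η²)^{−p/2} dξ dη ≤ C h^{min{0, 2−p}}; equivalently, Σ_{0≤i,j≤N−1, (i,j)≠(0,0)} ∫_{jh}^{(j+1)h} ∫_{ih}^{(i+1)h} (ξ²+η²)^{−p/2} dξ dη ≤ C h^{min{0, 2−p}}. -/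
/-!
Since `ξ² + η² ≥ ‖(ξ, η)‖²` for the sup norm, and the square minus its corner lies in the shell
`h < ‖z‖ ≤ L`, the integral is at most that of `‖z‖^(-p)` over this shell. Integrating a radial
function in polar form (the sup-norm unit ball of `ℝ²` has area `4`), the shell integral is
`8 ∫_h^L r^(1-p) dr = 8 (L^(2-p) - h^(2-p)) / (2-p)`: bounded for `p < 2`, and `O(h^(2-p))`
for `p > 2`.
-/

open MeasureTheory Set Metric

section AddHaar

variable {E F : Type*} [NormedAddCommGroup E] [NormedSpace ℝ E] [Nontrivial E]
  [FiniteDimensional ℝ E] [MeasurableSpace E] [BorelSpace E]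
  [NormedAddCommGroup F] [NormedSpace ℝ F] (μ : Measure E) [μ.IsAddHaarMeasure]

lemma integral_indicator_Ioc_norm_addHaar {a : ℝ} (ha : 0 ≤ a) (b : ℝ) (φ : ℝ → F) :
    ∫ x, (Ioc a b).indicator φ ‖x‖ ∂μ =
      Module.finrank ℝ E • μ.real (ball 0 1) •
        ∫ r in Ioc a b, r ^ (Module.finrank ℝ E - 1) • φ r := by
  simp_rw [integral_fun_norm_addHaar,
    ← indicator_smul_apply (Ioc a b) (fun r ↦ r ^ (Module.finrank ℝ E - 1)) φ,
    setIntegral_indicator measurableSet_Ioc,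
    inter_eq_right.2 (Ioc_subset_Ioi_self.trans (Ioi_subset_Ioi ha))]

lemma integrable_indicator_Ioc_rpow_norm {a : ℝ} (ha : 0 < a) (b s : ℝ) :
    Integrable (fun x : E ↦ (Ioc a b).indicator (fun r ↦ r ^ s) ‖x‖) μ := by
  simp_rw [integrable_fun_norm_addHaar,
    ← indicator_smul_apply (Ioc a b) (fun r ↦ r ^ (Module.finrank ℝ E - 1))]
  refine (integrable_indicator_iff measurableSet_Ioc).2 ?_ |>.integrableOn
  refine (ContinuousOn.integrableOn_Icc ?_).mono_set Ioc_subset_Icc_self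
  exact (continuousOn_pow _).smul
    (continuousOn_id.rpow_const fun r hr ↦ Or.inl (ha.trans_le hr.1).ne')

end AddHaar

lemma volume_real_ball_zero_one_prod : volume.real (ball (0 : ℝ × ℝ) 1) = 4 := by
  rw [show (0 : ℝ × ℝ) = (0, 0) from rfl, ← ball_prod_same, measureReal_def,
    Measure.volume_eq_prod, Measure.prod_prod, Real.volume_ball, ENNReal.toReal_mul, mul_one,
    ENNReal.toReal_ofReal two_pos.le]
  norm_num

lemma sq_add_sq_rpow_neg_half_le {z : ℝ × ℝ} (hz : z ≠ 0) {p : ℝ} (hp : 0 ≤ p) :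
    (z.1 ^ 2 + z.2 ^ 2) ^ (-p / 2) ≤ ‖z‖ ^ (-p) := by
  have hnorm_sq : ‖z‖ ^ 2 ≤ z.1 ^ 2 + z.2 ^ 2 := by
    rw [Prod.norm_def, Real.norm_eq_abs, Real.norm_eq_abs]
    rcases max_cases |z.1| |z.2| with ⟨h, _⟩ | ⟨h, _⟩ <;> rw [h, sq_abs] <;> nlinarith
  calc (z.1 ^ 2 + z.2 ^ 2) ^ (-p / 2) ≤ (‖z‖ ^ 2) ^ (-p / 2) :=
        Real.rpow_le_rpow_of_nonpos (by positivity) hnorm_sq (by linarith)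
    _ = ‖z‖ ^ (-p) := by
        rw [← Real.rpow_natCast, ← Real.rpow_mul (norm_nonneg z)]
        congr 1
        ring

lemma norm_mem_Ioc_of_mem_square_diff_corner {L h : ℝ} {z : ℝ × ℝ}
    (hz : z ∈ (Icc 0 L ×ˢ Icc 0 L) \ (Icc 0 h ×ˢ Icc 0 h)) : ‖z‖ ∈ Ioc h L := by
  obtain ⟨⟨⟨h1, h1L⟩, ⟨h2, h2L⟩⟩, hcorner⟩ := hz
  rw [Prod.norm_def, Real.norm_of_nonneg h1, Real.norm_of_nonneg h2]
  refine ⟨lt_max_iff.2 ?_, max_le h1L h2L⟩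
  by_contra! hle
  exact hcorner ⟨⟨h1, hle.1⟩, h2, hle.2⟩

lemma setIntegral_square_diff_corner_le {L h p : ℝ} (hh : 0 < h) (hp : 0 ≤ p) :
    ∫ z in (Icc 0 L ×ˢ Icc 0 L) \ (Icc 0 h ×ˢ Icc 0 h), (z.1 ^ 2 + z.2 ^ 2) ^ (-p / 2) ≤
      8 * ∫ r in Ioc h L, r ^ (1 - p) := by
  set g : ℝ × ℝ → ℝ := fun z ↦ (Ioc h L).indicator (fun r ↦ r ^ (-p)) ‖z‖
  have hg_int : Integrable g := integrable_indicator_Ioc_rpow_norm volume hh L (-p)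
  have hg_nonneg : 0 ≤ g := fun z ↦
    indicator_nonneg (fun r hr ↦ Real.rpow_nonneg (hh.le.trans hr.1.le) _) _
  have hle_g : ∀ z ∈ (Icc 0 L ×ˢ Icc 0 L) \ (Icc 0 h ×ˢ Icc 0 h),
      (z.1 ^ 2 + z.2 ^ 2) ^ (-p / 2) ≤ g z := by
    intro z hz
    have hnorm := norm_mem_Ioc_of_mem_square_diff_corner hz
    rw [show g z = ‖z‖ ^ (-p) from indicator_of_mem hnorm _]
    exact sq_add_sq_rpow_neg_half_le (norm_pos_iff.1 (hh.trans hnorm.1)) hp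
  calc _ ≤ ∫ z in (Icc 0 L ×ˢ Icc 0 L) \ (Icc 0 h ×ˢ Icc 0 h), g z :=
        integral_mono_of_nonneg (ae_of_all _ fun z ↦ Real.rpow_nonneg (by positivity) _)
          hg_int.integrableOn (ae_restrict_of_forall_mem (by measurability) hle_g)
    _ ≤ ∫ z, g z := setIntegral_le_integral hg_int (ae_of_all _ hg_nonneg)
    _ = 8 * ∫ r in Ioc h L, r ^ (1 - p) := by
        have hdim : Module.finrank ℝ (ℝ × ℝ) = 2 := by simp
        rw [integral_indicator_Ioc_norm_addHaar volume hh.le, volume_real_ball_zero_one_prod, hdim,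
          setIntegral_congr_fun measurableSet_Ioc (g := fun r ↦ r ^ (1 - p)) fun r hr ↦ ?_]
        · norm_num [← mul_assoc]
        · have hr₀ : 0 < r := hh.trans hr.1
          norm_num [Real.rpow_sub hr₀, Real.rpow_neg hr₀.le, div_eq_mul_inv]

lemma rpow_sub_rpow_div_le {q h L : ℝ} (hq : q ≠ 0) (hh : 0 < h) (hhL : h ≤ L) :
    (L ^ q - h ^ q) / q ≤ max (L ^ q) 1 / |q| * h ^ min 0 q := by
  have hL : 0 < L := hh.trans_le hhL
  rcases hq.lt_or_gt with hneg | hpos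
  · rw [min_eq_right hneg.le, abs_of_neg hneg]
    calc (L ^ q - h ^ q) / q = (h ^ q - L ^ q) / -q := by rw [← neg_div_neg_eq, neg_sub]
      _ ≤ 1 * h ^ q / -q := by
          gcongr
          · linarith
          · linarith [Real.rpow_pos_of_pos hL q]
      _ ≤ max (L ^ q) 1 / -q * h ^ q := by
          rw [div_mul_eq_mul_div]
          gcongr
          · linarith
          · exact le_max_right _ _
  · rw [min_eq_left hpos.le, Real.rpow_zero, mul_one, abs_of_pos hpos]
    gcongr
    linarith [Real.rpow_pos_of_pos hh q, le_max_left (L ^ q) 1]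

/-- For `L > 0` and `p > 0`, `p ≠ 2`, the integral of `(ξ²+η²)^{-p/2}` over the square
`[0,L]²` with the corner square `[0,h]²` removed (`h = L/N`) is bounded by
`C h^{min{0, 2-p}}`, with `C` depending only on `p` and `L`. -/
theorem annular_grid_integral_bound (L p : ℝ) (hL : 0 < L) (hp : 0 < p) (hp2 : p ≠ 2) :
    ∃ C : ℝ, 0 < C ∧ ∀ N : ℕ, 1 ≤ N →
      (∫ ξ in (Icc (0 : ℝ) L ×ˢ Icc (0 : ℝ) L) \ (Icc (0 : ℝ) (L / N) ×ˢ Icc (0 : ℝ) (L / N)),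
          (ξ.1 ^ 2 + ξ.2 ^ 2) ^ (-p / 2))
        ≤ C * (L / N) ^ (min 0 (2 - p)) := by
  have hq : 2 - p ≠ 0 := sub_ne_zero.2 hp2.symm
  refine ⟨8 * (max (L ^ (2 - p)) 1 / |2 - p|), by positivity, fun N hN ↦ ?_⟩
  have hh : 0 < L / N := div_pos hL (by exact_mod_cast hN)
  have hhL : L / N ≤ L := div_le_self hL.le (by exact_mod_cast hN)
  calc _ ≤ 8 * ∫ r in Ioc (L / N) L, r ^ (1 - p) := setIntegral_square_diff_corner_le hh hp.le
    _ = 8 * ((L ^ (2 - p) - (L / N) ^ (2 - p)) / (2 - p)) := by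
        rw [← intervalIntegral.integral_of_le hhL, integral_rpow (Or.inr ⟨by
          contrapose! hq; linarith, notMem_uIcc_of_lt hh (hh.trans_le hhL)⟩),
          show 1 - p + 1 = 2 - p by ring]
    _ ≤ _ := by
        rw [mul_assoc]
        gcongr
        exact rpow_sub_rpow_div_le hq hh hhL
end
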